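/- arXiv:1810.02177 — 5 statements merged into one kernel-verified Lean document; each statement's English description precedes it below -/
import Mathlib

section
/- Let $H \in (0,1)$ and $\theta > 0$. There exists a constant $C > 0$ (depending on $\theta$ and $H$) such that for all $T \geq 1$, $\Big| \frac{H}{T} \int_0^T e^{-\theta t} \Big( \int_0^t e^{\theta u} (t-u)^{2H-1} \, du \Big) dt - H \Gamma(2H) \theta^{-2H} \Big| \leq \frac{C}{T}$. -/
/-!
The substitution `s = t - u` turns `e^{-θt} ∫₀ᵗ e^{θu} (t-u)^{2H-1} du` into the lower incomplete
Gamma integral `F t = ∫₀ᵗ s^{2H-1} e^{-θs} ds`, whose limit is `L = Γ(2H) θ^{-2H}`. Hence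
`∫₀ᵀ F - T L = -∫₀ᵀ (∫ₜ^∞ s^{2H-1} e^{-θs} ds) dt`, and since `e^{-θs} ≤ e^{-θt/2} e^{-θs/2}` for
`s ≥ t`, the tail is `O(e^{-θt/2})`, so this difference is bounded uniformly in `T`.
-/

open MeasureTheory Real Filter

theorem exp_neg_mul_mul_integral_exp_mul_mul_rpow_sub (θ r t : ℝ) :
    exp (-θ * t) * ∫ u in (0:ℝ)..t, exp (θ * u) * (t - u) ^ r =
      ∫ s in (0:ℝ)..t, s ^ r * exp (-(θ * s)) := by
  rw [← intervalIntegral.integral_const_mul]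
  have hsub := intervalIntegral.integral_comp_sub_left (fun s => s ^ r * exp (-(θ * s))) t
    (a := 0) (b := t)
  rw [sub_self, sub_zero] at hsub
  rw [← hsub]
  refine intervalIntegral.integral_congr fun u _ => ?_
  rw [← mul_assoc, ← exp_add, mul_comm]
  congr 2
  ring

theorem integrableOn_Ioi_rpow_mul_exp_neg_mul {r b : ℝ} (hr : -1 < r) (hb : 0 < b) :
    IntegrableOn (fun s : ℝ => s ^ r * exp (-(b * s))) (Set.Ioi 0) := by
  simpa using integrableOn_rpow_mul_exp_neg_mul_rpow hr zero_lt_one hb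

theorem integral_Ioi_rpow_mul_exp_neg_mul_le {a θ t : ℝ} (ha : 0 < a) (hθ : 0 < θ)
    (ht : 0 ≤ t) :
    ∫ s in Set.Ioi t, s ^ (a - 1) * exp (-(θ * s)) ≤
      (2 / θ) ^ a * Gamma a * exp (-(θ / 2) * t) := by
  have hint : ∀ b : ℝ, 0 < b → IntegrableOn (fun s : ℝ => s ^ (a - 1) * exp (-(b * s)))
      (Set.Ioi 0) := fun b hb => integrableOn_Ioi_rpow_mul_exp_neg_mul (by linarith) hb
  have hhalf := integral_rpow_mul_exp_neg_mul_Ioi ha (half_pos hθ)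
  rw [one_div_div] at hhalf
  rw [← hhalf, mul_comm, ← integral_const_mul]
  calc ∫ s in Set.Ioi t, s ^ (a - 1) * exp (-(θ * s))
      ≤ ∫ s in Set.Ioi t, exp (-(θ / 2) * t) * (s ^ (a - 1) * exp (-(θ / 2 * s))) := by
        refine setIntegral_mono_on ((hint θ hθ).mono_set (Set.Ioi_subset_Ioi ht))
          (((hint _ (half_pos hθ)).mono_set (Set.Ioi_subset_Ioi ht)).const_mul _)
          measurableSet_Ioi fun s hs => ?_
        rw [mul_left_comm, ← exp_add]
        have hts : t ≤ s := le_of_lt hs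
        refine mul_le_mul_of_nonneg_left (exp_le_exp.mpr ?_) (rpow_nonneg (ht.trans hts) _)
        nlinarith
    _ ≤ ∫ s in Set.Ioi 0, exp (-(θ / 2) * t) * (s ^ (a - 1) * exp (-(θ / 2 * s))) := by
        refine setIntegral_mono_set ((hint _ (half_pos hθ)).const_mul _) ?_
          (Set.Ioi_subset_Ioi ht).eventuallyLE
        filter_upwards [self_mem_ae_restrict measurableSet_Ioi] with s hs
        exact mul_nonneg (exp_pos _).le (mul_nonneg (rpow_nonneg (le_of_lt hs) _) (exp_pos _).le)

theorem abs_integral_integral_sub_mul_integral_Ioi_le {f : ℝ → ℝ} {a c T : ℝ}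
    (hf : IntegrableOn f (Set.Ioi 0)) (ha : 0 < a) (hT : 0 ≤ T)
    (htail : ∀ t, 0 ≤ t → |∫ s in Set.Ioi t, f s| ≤ c * exp (-a * t)) :
    |(∫ t in (0:ℝ)..T, ∫ s in (0:ℝ)..t, f s) - T * ∫ s in Set.Ioi 0, f s| ≤ c / a := by
  have hprim : ContinuousOn (fun t => ∫ s in (0:ℝ)..t, f s) (Set.uIcc 0 T) :=
    intervalIntegral.continuousOn_primitive_interval'
      ((intervalIntegrable_iff_integrableOn_Ioc_of_le hT).mpr
        (hf.mono_set Set.Ioc_subset_Ioi_self)) Set.left_mem_uIcc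
  have hexp : ∫ t in Set.Ioi 0, c * exp (-a * t) = c / a := by
    rw [integral_const_mul, integral_exp_mul_Ioi (by linarith), mul_zero, exp_zero]
    field_simp
  have hc : 0 ≤ c := by simpa using (abs_nonneg _).trans (htail 0 le_rfl)
  have hconst : T * ∫ s in Set.Ioi 0, f s = ∫ _ in (0:ℝ)..T, ∫ s in Set.Ioi 0, f s := by simp
  rw [hconst, ← intervalIntegral.integral_sub hprim.intervalIntegrable intervalIntegrable_const,
    ← hexp]
  calc |∫ t in (0:ℝ)..T, ((∫ s in (0:ℝ)..t, f s) - ∫ s in Set.Ioi 0, f s)|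
      ≤ ∫ t in (0:ℝ)..T, c * exp (-a * t) := by
        rw [← Real.norm_eq_abs]
        refine intervalIntegral.norm_integral_le_of_norm_le hT
          (Eventually.of_forall fun t ht => ?_)
          ((by fun_prop : Continuous fun t => c * exp (-a * t)).intervalIntegrable (μ := volume) _ _)
        rw [← intervalIntegral.integral_Ioi_sub_Ioi hf ht.1.le, sub_sub_cancel_left,
          Real.norm_eq_abs, abs_neg]
        exact htail t ht.1.le
    _ ≤ ∫ t in Set.Ioi 0, c * exp (-a * t) := by
        rw [intervalIntegral.integral_of_le hT]
        refine setIntegral_mono_set ?_ ?_ Set.Ioc_subset_Ioi_self.eventuallyLE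
        · exact (exp_neg_integrableOn_Ioi 0 ha).const_mul c
        · exact Eventually.of_forall fun t => by positivity

theorem stmt_3 (H θ : ℝ) (hH : H ∈ Set.Ioo (0:ℝ) 1) (hθ : 0 < θ) :
    ∃ C : ℝ, 0 < C ∧ ∀ T : ℝ, 1 ≤ T →
      |(H / T) * (∫ t in (0:ℝ)..T, Real.exp (-θ * t) *
            (∫ u in (0:ℝ)..t, Real.exp (θ * u) * (t - u) ^ (2 * H - 1))) -
          H * Real.Gamma (2 * H) * θ ^ (-(2 * H))| ≤ C / T := by
  obtain ⟨hH0, -⟩ := hH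
  refine ⟨H * ((2 / θ) ^ (2 * H) * Gamma (2 * H) / (θ / 2)), by positivity, fun T hT => ?_⟩
  have hT0 : 0 < T := by linarith
  have hmain := abs_integral_integral_sub_mul_integral_Ioi_le
    (integrableOn_Ioi_rpow_mul_exp_neg_mul (r := 2 * H - 1) (by linarith) hθ) (half_pos hθ)
    hT0.le fun t ht => by
      rw [abs_of_nonneg (setIntegral_nonneg measurableSet_Ioi fun s hs =>
        mul_nonneg (rpow_nonneg (ht.trans hs.le) _) (exp_pos _).le)]
      exact integral_Ioi_rpow_mul_exp_neg_mul_le (by linarith) hθ ht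
  rw [integral_rpow_mul_exp_neg_mul_Ioi (by linarith) hθ, one_div, inv_rpow hθ.le,
    ← rpow_neg hθ.le] at hmain
  simp_rw [exp_neg_mul_mul_integral_exp_mul_mul_rpow_sub]
  calc _ = |H / T * ((∫ t in (0:ℝ)..T, ∫ s in (0:ℝ)..t, s ^ (2 * H - 1) * exp (-(θ * s))) -
        T * (θ ^ (-(2 * H)) * Gamma (2 * H)))| := by
        congr 1
        field_simp
    _ ≤ H / T * ((2 / θ) ^ (2 * H) * Gamma (2 * H) / (θ / 2)) := by
        rw [abs_mul, abs_of_pos (div_pos hH0 hT0)]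
        gcongr
    _ = _ := by ring
end

section
/- Let $H \in (0,1)$ and $\theta > 0$, and for $T > 0$ define $b_T := \frac{H}{T} \int_0^T e^{-2\theta t} \Big( \int_0^t e^{\theta u} u^{2H-1} \, du + \int_0^t e^{\theta(u+t)} (t-u)^{2H-1} \, du \Big) dt$. Then there exists a constant $C > 0$ (depending on $\theta$ and $H$) such that for all $T \geq 1$, $\big| b_T - H \Gamma(2H) \theta^{-2H} \big| \leq \frac{C}{T}$. In particular $b_T \to H\Gamma(2H)\theta^{-2H}$ as $T \to \infty$ with speed at least $1/T$. -/
/-!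
Substituting `v = t - u` in the second inner integral turns the integrand of `b_T` into
`e^{-2θt} ∫₀ᵗ e^{θu} u^{2H-1} du + ∫₀ᵗ e^{-θv} v^{2H-1} dv`. The first term is at most
`e^{-θt} t^{2H} / 2H`, and the second differs from its limit `Γ(2H) θ^{-2H}` by the tail of a
Gamma integral, which is `O(e^{-θt/2})`. Both errors are integrable on `(0, ∞)`, so the Cesàro
average `b_T / H` is within `O(1/T)` of `Γ(2H) θ^{-2H}`.
-/

open MeasureTheory Real Filter Set

theorem abs_average_sub_le_of_abs_sub_le {g φ : ℝ → ℝ} {L T : ℝ} (hT : 0 < T)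
    (hg : IntervalIntegrable g volume 0 T) (hφ : IntegrableOn φ (Ioi 0))
    (hgφ : ∀ t > 0, |g t - L| ≤ φ t) :
    |T⁻¹ * (∫ t in 0..T, g t) - L| ≤ (∫ t in Ioi 0, φ t) / T := by
  have hφ_nonneg : ∀ t > 0, 0 ≤ φ t := fun t ht => (abs_nonneg _).trans (hgφ t ht)
  have h_avg : T⁻¹ * (∫ t in 0..T, g t) - L = T⁻¹ * ∫ t in 0..T, (g t - L) := by
    rw [intervalIntegral.integral_sub hg intervalIntegrable_const,
      intervalIntegral.integral_const, smul_eq_mul, sub_zero]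
    field_simp
  have h_int : ‖∫ t in 0..T, (g t - L)‖ ≤ ∫ t in 0..T, φ t :=
    intervalIntegral.norm_integral_le_of_norm_le hT.le
      (ae_of_all _ fun t ht => hgφ t ht.1)
      ((intervalIntegrable_iff_integrableOn_Ioc_of_le hT.le).2 (hφ.mono_set Ioc_subset_Ioi_self))
  have h_mono : ∫ t in 0..T, φ t ≤ ∫ t in Ioi 0, φ t := by
    rw [intervalIntegral.integral_of_le hT.le]
    exact setIntegral_mono_set hφ
      ((ae_restrict_iff' measurableSet_Ioi).2 (ae_of_all _ hφ_nonneg))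
      Ioc_subset_Ioi_self.eventuallyLE
  rw [h_avg, abs_mul, abs_inv, abs_of_pos hT, inv_mul_eq_div, ← Real.norm_eq_abs]
  exact div_le_div_of_nonneg_right (h_int.trans h_mono) hT.le

theorem exists_pos_and_tendsto_of_abs_sub_le_div {b : ℝ → ℝ} {L M : ℝ}
    (h : ∀ T ≥ 1, |b T - L| ≤ M / T) :
    (∃ C > 0, ∀ T ≥ 1, |b T - L| ≤ C / T) ∧ Tendsto b atTop (nhds L) := by
  refine ⟨⟨max M 1, by positivity, fun T hT => (h T hT).trans ?_⟩, ?_⟩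
  · exact div_le_div_of_nonneg_right (le_max_left _ _) (by linarith)
  · rw [tendsto_iff_norm_sub_tendsto_zero]
    refine squeeze_zero' (Eventually.of_forall fun _ => norm_nonneg _) ?_
      ((tendsto_const_nhds (x := M)).div_atTop tendsto_id)
    filter_upwards [eventually_ge_atTop 1] with T hT using h T hT

section GammaKernel

variable {c s t : ℝ}

theorem integrableOn_rpow_mul_exp_neg_mul (hs : 0 < s) (hc : 0 < c) :
    IntegrableOn (fun v => v ^ (s - 1) * exp (-(c * v))) (Ioi 0) :=
  IntegrableOn.congr_fun
    (integrableOn_rpow_mul_exp_neg_mul_rpow (s := s - 1) (p := 1) (by linarith) one_pos hc)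
    (fun v _ => by simp only [rpow_one, neg_mul]) measurableSet_Ioi

/-- Splitting `e^{-cv} = e^{-cv/2} e^{-cv/2}` and bounding one factor by `e^{-ct/2}` makes the
tail of a Gamma integral decay exponentially. -/
theorem setIntegral_Ioi_rpow_mul_exp_neg_mul_le (hs : 0 < s) (hc : 0 < c) (ht : 0 ≤ t) :
    ∫ v in Ioi t, v ^ (s - 1) * exp (-(c * v))
      ≤ exp (-(c / 2 * t)) * ∫ v in Ioi 0, v ^ (s - 1) * exp (-(c / 2 * v)) := by
  have hf := integrableOn_rpow_mul_exp_neg_mul hs hc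
  have hf_half := integrableOn_rpow_mul_exp_neg_mul hs (half_pos hc)
  have hpointwise : ∀ v ∈ Ioi t, v ^ (s - 1) * exp (-(c * v))
      ≤ exp (-(c / 2 * t)) * (v ^ (s - 1) * exp (-(c / 2 * v))) := by
    intro v hv
    rw [mul_left_comm, ← exp_add]
    exact mul_le_mul_of_nonneg_left (exp_le_exp.2 (by nlinarith [hv.out]))
      (rpow_nonneg (ht.trans hv.out.le) _)
  rw [← integral_const_mul]
  calc ∫ v in Ioi t, v ^ (s - 1) * exp (-(c * v))
      ≤ ∫ v in Ioi t, exp (-(c / 2 * t)) * (v ^ (s - 1) * exp (-(c / 2 * v))) :=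
        setIntegral_mono_on (hf.mono_set (Ioi_subset_Ioi ht))
          ((hf_half.mono_set (Ioi_subset_Ioi ht)).const_mul _) measurableSet_Ioi hpointwise
    _ ≤ ∫ v in Ioi 0, exp (-(c / 2 * t)) * (v ^ (s - 1) * exp (-(c / 2 * v))) :=
        setIntegral_mono_set (hf_half.const_mul _)
          ((ae_restrict_iff' measurableSet_Ioi).2 (ae_of_all _ fun v hv =>
            mul_nonneg (exp_pos _).le (mul_nonneg (rpow_nonneg hv.out.le _) (exp_pos _).le)))
          (Ioi_subset_Ioi ht).eventuallyLE

theorem abs_integral_rpow_mul_exp_neg_mul_sub_le (hs : 0 < s) (hc : 0 < c) (ht : 0 ≤ t) :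
    |(∫ v in 0..t, v ^ (s - 1) * exp (-(c * v))) - Gamma s * c ^ (-s)|
      ≤ exp (-(c / 2 * t)) * ∫ v in Ioi 0, v ^ (s - 1) * exp (-(c / 2 * v)) := by
  have hgamma : Gamma s * c ^ (-s) = ∫ v in Ioi 0, v ^ (s - 1) * exp (-(c * v)) := by
    rw [integral_rpow_mul_exp_neg_mul_Ioi hs hc, one_div, inv_rpow hc.le, rpow_neg hc.le,
      mul_comm]
  have htail_nonneg : 0 ≤ ∫ v in Ioi t, v ^ (s - 1) * exp (-(c * v)) :=
    setIntegral_nonneg measurableSet_Ioi fun v hv =>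
      mul_nonneg (rpow_nonneg (ht.trans hv.out.le) _) (exp_pos _).le
  rw [hgamma, ← intervalIntegral.integral_Ioi_sub_Ioi
    (integrableOn_rpow_mul_exp_neg_mul hs hc) ht, sub_sub_cancel_left, abs_neg,
    abs_of_nonneg htail_nonneg]
  exact setIntegral_Ioi_rpow_mul_exp_neg_mul_le hs hc ht

end GammaKernel

theorem integral_exp_mul_rpow_le {c s t : ℝ} (hc : 0 ≤ c) (hs : 0 < s) (ht : 0 ≤ t) :
    ∫ u in 0..t, exp (c * u) * u ^ (s - 1) ≤ exp (c * t) * (t ^ s / s) := by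
  have hrpow : IntervalIntegrable (fun u => u ^ (s - 1)) volume 0 t :=
    intervalIntegral.intervalIntegrable_rpow' (by linarith)
  calc ∫ u in 0..t, exp (c * u) * u ^ (s - 1) ≤ ∫ u in 0..t, exp (c * t) * u ^ (s - 1) :=
        intervalIntegral.integral_mono_on ht (hrpow.continuousOn_mul (by fun_prop))
          (hrpow.const_mul _) fun u hu => mul_le_mul_of_nonneg_right
            (exp_le_exp.2 (mul_le_mul_of_nonneg_left hu.2 hc)) (rpow_nonneg hu.1 _)
    _ = exp (c * t) * (t ^ s / s) := by
        rw [intervalIntegral.integral_const_mul, integral_rpow (Or.inl (by linarith)),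
          sub_add_cancel, zero_rpow hs.ne', sub_zero]

theorem integral_exp_mul_add_mul_sub_rpow (c s t : ℝ) :
    ∫ u in 0..t, exp (c * (u + t)) * (t - u) ^ (s - 1)
      = exp (2 * c * t) * ∫ v in 0..t, v ^ (s - 1) * exp (-(c * v)) := by
  have hsubst : ∀ u, exp (c * (u + t)) * (t - u) ^ (s - 1)
      = exp (2 * c * t) * ((t - u) ^ (s - 1) * exp (-(c * (t - u)))) := by
    intro u
    rw [show c * (u + t) = 2 * c * t + -(c * (t - u)) by ring, exp_add]
    ring
  simp_rw [hsubst]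
  rw [intervalIntegral.integral_const_mul,
    intervalIntegral.integral_comp_sub_left (fun v => v ^ (s - 1) * exp (-(c * v))), sub_self,
    sub_zero]

/-- For `s = 2H`, `H * ouSqNorm θ s t = ‖e^{-θ(t-·)} 1_{[0,t]}‖²_𝔥`, so `b_T` is `H` times the
average of `ouSqNorm θ (2H)` over `[0, T]`. -/
noncomputable def ouSqNorm (θ s t : ℝ) : ℝ :=
  exp (-(2 * θ) * t) * ((∫ u in (0:ℝ)..t, exp (θ * u) * u ^ (s - 1)) +
    ∫ u in (0:ℝ)..t, exp (θ * (u + t)) * (t - u) ^ (s - 1))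

section ouSqNorm

variable {θ s : ℝ}

theorem ouSqNorm_eq (t : ℝ) :
    ouSqNorm θ s t = exp (-(2 * θ) * t) * (∫ u in 0..t, exp (θ * u) * u ^ (s - 1)) +
      ∫ v in 0..t, v ^ (s - 1) * exp (-(θ * v)) := by
  rw [ouSqNorm, integral_exp_mul_add_mul_sub_rpow, mul_add, ← mul_assoc, ← exp_add,
    show -(2 * θ) * t + 2 * θ * t = 0 by ring, exp_zero, one_mul]

theorem continuous_ouSqNorm (hs : 0 < s) : Continuous (ouSqNorm θ s) := by
  have hrpow : ∀ a b, IntervalIntegrable (fun u => u ^ (s - 1)) volume a b := fun _ _ =>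
    intervalIntegral.intervalIntegrable_rpow' (by linarith)
  rw [funext ouSqNorm_eq]
  exact (by fun_prop : Continuous fun t => exp (-(2 * θ) * t)).mul
      (intervalIntegral.continuous_primitive
        (fun a b => (hrpow a b).continuousOn_mul (by fun_prop)) 0) |>.add
    (intervalIntegral.continuous_primitive
      (fun a b => (hrpow a b).mul_continuousOn (by fun_prop)) 0)

theorem abs_ouSqNorm_sub_le (hθ : 0 < θ) (hs : 0 < s) {t : ℝ} (ht : 0 ≤ t) :
    |ouSqNorm θ s t - Gamma s * θ ^ (-s)|
      ≤ exp (-(θ * t)) * (t ^ s / s) +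
        exp (-(θ / 2 * t)) * ∫ v in Ioi 0, v ^ (s - 1) * exp (-(θ / 2 * v)) := by
  have hfirst_nonneg : 0 ≤ exp (-(2 * θ) * t) * ∫ u in 0..t, exp (θ * u) * u ^ (s - 1) :=
    mul_nonneg (exp_pos _).le (intervalIntegral.integral_nonneg ht fun u hu =>
      mul_nonneg (exp_pos _).le (rpow_nonneg hu.1 _))
  have hfirst_le : exp (-(2 * θ) * t) * (∫ u in 0..t, exp (θ * u) * u ^ (s - 1))
      ≤ exp (-(θ * t)) * (t ^ s / s) :=
    calc exp (-(2 * θ) * t) * (∫ u in 0..t, exp (θ * u) * u ^ (s - 1))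
        ≤ exp (-(2 * θ) * t) * (exp (θ * t) * (t ^ s / s)) :=
          mul_le_mul_of_nonneg_left (integral_exp_mul_rpow_le hθ.le hs ht) (exp_pos _).le
      _ = exp (-(θ * t)) * (t ^ s / s) := by
          rw [← mul_assoc, ← exp_add, show -(2 * θ) * t + θ * t = -(θ * t) by ring]
  rw [ouSqNorm_eq, add_sub_assoc]
  refine (abs_add_le _ _).trans
    (add_le_add ?_ (abs_integral_rpow_mul_exp_neg_mul_sub_le hs hθ ht))
  rwa [abs_of_nonneg hfirst_nonneg]

theorem exists_abs_average_ouSqNorm_sub_le (hθ : 0 < θ) (hs : 0 < s) :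
    ∃ M, ∀ T > 0, |T⁻¹ * (∫ t in 0..T, ouSqNorm θ s t) - Gamma s * θ ^ (-s)| ≤ M / T := by
  set K := ∫ v in Ioi 0, v ^ (s - 1) * exp (-(θ / 2 * v))
  have hpoly : IntegrableOn (fun t => exp (-(θ * t)) * (t ^ s / s)) (Ioi 0) :=
    IntegrableOn.congr_fun
      ((integrableOn_rpow_mul_exp_neg_mul (s := s + 1) (by linarith) hθ).div_const s)
      (fun t _ => by rw [add_sub_cancel_right]; ring) measurableSet_Ioi
  have hexp : IntegrableOn (fun t => exp (-(θ / 2 * t)) * K) (Ioi 0) :=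
    IntegrableOn.congr_fun ((exp_neg_integrableOn_Ioi 0 (half_pos hθ)).mul_const K)
      (fun t _ => by rw [neg_mul]) measurableSet_Ioi
  exact ⟨_, fun T hT => abs_average_sub_le_of_abs_sub_le hT
    ((continuous_ouSqNorm hs).intervalIntegrable _ _) (hpoly.add hexp)
    fun t ht => abs_ouSqNorm_sub_le hθ hs ht.le⟩

end ouSqNorm

theorem stmt_4 (H θ : ℝ) (hH : H ∈ Set.Ioo (0:ℝ) 1) (hθ : 0 < θ)
    (b : ℝ → ℝ)
    (hb : ∀ T : ℝ, 0 < T → b T = (H / T) * (∫ t in (0:ℝ)..T, Real.exp (-(2 * θ) * t) *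
        ((∫ u in (0:ℝ)..t, Real.exp (θ * u) * u ^ (2 * H - 1)) +
          (∫ u in (0:ℝ)..t, Real.exp (θ * (u + t)) * (t - u) ^ (2 * H - 1))))) :
    (∃ C : ℝ, 0 < C ∧ ∀ T : ℝ, 1 ≤ T →
        |b T - H * Real.Gamma (2 * H) * θ ^ (-(2 * H))| ≤ C / T) ∧
      Tendsto b atTop (nhds (H * Real.Gamma (2 * H) * θ ^ (-(2 * H)))) := by
  obtain ⟨M, hM⟩ := exists_abs_average_ouSqNorm_sub_le hθ (mul_pos two_pos hH.1)
  refine exists_pos_and_tendsto_of_abs_sub_le_div (M := H * M) fun T hT => ?_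
  have hT0 : 0 < T := by linarith
  have hbT : b T = H * (T⁻¹ * ∫ t in 0..T, ouSqNorm θ (2 * H) t) := by
    rw [hb T hT0, div_eq_mul_inv, mul_assoc]
    rfl
  rw [hbT, mul_assoc H, ← mul_sub, abs_mul, abs_of_pos hH.1, mul_div_assoc]
  exact mul_le_mul_of_nonneg_left (hM T hT0) hH.1.le
end

section
/- Let $H \in (0, 3/4)$. Then $\lim_{T \to \infty} \frac{1}{T e^{4T}} \int_{[0,T]^4} e^{t_1 + s_1 + t_2 + s_2} \, H\big(t_2^{2H-1} - \mathrm{sgn}(t_2 - t_1)|t_2 - t_1|^{2H-1}\big) \, H\big(s_1^{2H-1} - \mathrm{sgn}(s_1 - s_2)|s_1 - s_2|^{2H-1}\big) \, dt_1 \, dt_2 \, ds_1 \, ds_2 = 0$. -/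
/-!
Write `a = 2H - 1 ∈ (-1, 1/2)`. The integrand separates, so the quadruple integral is a product of
two double integrals `∫₀ᵀ eˣ ∫₀ᵀ eʸ F(x, y) dy dx` with `|F(x, y)| ≤ H (|x|^a + |y|^a + |y - x|^a)`.
Against the weight `eʸ`, the possible singularity of `|y - c|^a` at `y = c` costs at most
`e^T ∫₋₁¹ |u|^a du = 2 e^T / (a + 1)`, and away from it `|y - c|^a ≤ 1 + T^a`. Hence each double
integral is `O(e^{2T} (1 + T^a))`, and after dividing by `T e^{4T}` we are left with
`O((1 + T^a)² / T)`, which tends to `0` precisely because `a < 1/2`.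
-/

open MeasureTheory Real Filter Set intervalIntegral Topology

lemma abs_rpow_sub_sign_mul_abs_rpow_le (x u a : ℝ) :
    |x ^ a - Real.sign u * |u| ^ a| ≤ |x| ^ a + |u| ^ a := by
  have sign_le : |Real.sign u| ≤ 1 := by
    rcases Real.sign_apply_eq u with h | h | h <;> simp [h]
  calc |x ^ a - Real.sign u * |u| ^ a| ≤ |x ^ a| + |Real.sign u| * |u| ^ a :=
        (abs_sub _ _).trans_eq (by rw [abs_mul, abs_of_nonneg (rpow_nonneg (abs_nonneg u) a)])
    _ ≤ |x| ^ a + 1 * |u| ^ a := by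
        gcongr
        exact abs_rpow_le_abs_rpow x a
    _ = |x| ^ a + |u| ^ a := by ring

section ExpWeightedRpow

variable {a : ℝ}

lemma intervalIntegrable_abs_rpow (ha : -1 < a) (b c : ℝ) :
    IntervalIntegrable (fun u : ℝ => |u| ^ a) volume b c := by
  have of_nonneg : ∀ d, 0 ≤ d → IntervalIntegrable (fun u : ℝ => |u| ^ a) volume 0 d := by
    intro d hd
    have h := intervalIntegrable_rpow' ha (a := 0) (b := d)
    rw [intervalIntegrable_iff_integrableOn_Ioc_of_le hd] at h ⊢
    exact h.congr_fun (fun u hu => by rw [abs_of_pos hu.1]) measurableSet_Ioc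
  have from_zero : ∀ d, IntervalIntegrable (fun u : ℝ => |u| ^ a) volume 0 d := by
    intro d
    rcases le_total 0 d with hd | hd
    · exact of_nonneg d hd
    · rw [IntervalIntegrable.iff_comp_neg]
      simpa using of_nonneg (-d) (neg_nonneg.2 hd)
  exact (from_zero b).symm.trans (from_zero c)

lemma integral_abs_rpow_neg_one_one (ha : -1 < a) :
    ∫ u in (-1 : ℝ)..1, |u| ^ a = 2 / (a + 1) := by
  have h01 : ∫ u in (0 : ℝ)..1, |u| ^ a = 1 / (a + 1) := by
    rw [integral_congr (g := fun u : ℝ => u ^ a) fun u hu => by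
        rw [uIcc_of_le zero_le_one] at hu
        simp only [abs_of_nonneg hu.1],
      integral_rpow (Or.inl ha), one_rpow, zero_rpow (by linarith)]
    ring
  have h10 : ∫ u in (-1 : ℝ)..0, |u| ^ a = 1 / (a + 1) := by
    have h := integral_comp_neg (a := 0) (b := 1) fun u : ℝ => |u| ^ a
    simp only [abs_neg, neg_zero] at h
    rw [← h, h01]
  rw [← integral_add_adjacent_intervals (intervalIntegrable_abs_rpow ha _ _)
    (intervalIntegrable_abs_rpow ha _ _), h10, h01]
  ring

lemma intervalIntegrable_abs_sub_rpow (ha : -1 < a) (c b d : ℝ) :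
    IntervalIntegrable (fun t => |t - c| ^ a) volume b d := by
  simpa using (intervalIntegrable_abs_rpow ha (b - c) (d - c)).comp_sub_right c

lemma intervalIntegrable_exp_mul_abs_sub_rpow (ha : -1 < a) (c b d : ℝ) :
    IntervalIntegrable (fun t => exp t * |t - c| ^ a) volume b d :=
  (intervalIntegrable_abs_sub_rpow ha c b d).continuousOn_mul continuous_exp.continuousOn

lemma rpow_le_one_add_rpow {u T : ℝ} (hu : 1 ≤ u) (huT : u ≤ T) : u ^ a ≤ 1 + T ^ a := by
  rcases le_total 0 a with ha | ha
  · linarith [rpow_le_rpow (by linarith) huT ha, zero_le_one' ℝ]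
  · linarith [rpow_le_one_of_one_le_of_nonpos hu ha, rpow_nonneg (by linarith : 0 ≤ T) a]

lemma integral_exp_mul_abs_sub_rpow_le (ha : -1 < a) {c T : ℝ} (hc0 : 0 ≤ c) (hcT : c ≤ T) :
    ∫ t in (0 : ℝ)..T, exp t * |t - c| ^ a ≤ exp T * (1 + T ^ a + 2 / (a + 1)) := by
  have hT : 0 ≤ T := hc0.trans hcT
  set near : ℝ → ℝ := (Icc (c - 1) (c + 1)).indicator fun t => |t - c| ^ a with hnear
  have near_nonneg : 0 ≤ near := indicator_nonneg fun t _ => rpow_nonneg (abs_nonneg _) _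
  have near_integrable : Integrable near := by
    rw [integrable_indicator_iff measurableSet_Icc, integrableOn_Icc_iff_integrableOn_Ioc,
      ← intervalIntegrable_iff_integrableOn_Ioc_of_le (by linarith)]
    exact intervalIntegrable_abs_sub_rpow ha c _ _
  have integral_near : ∫ t, near t = 2 / (a + 1) := by
    rw [MeasureTheory.integral_indicator measurableSet_Icc, integral_Icc_eq_integral_Ioc,
      ← integral_of_le (by linarith), integral_comp_sub_right (fun u => |u| ^ a) c]
    simpa using integral_abs_rpow_neg_one_one ha
  have pointwise : ∀ t ∈ Icc 0 T,
      exp t * |t - c| ^ a ≤ exp t * (1 + T ^ a) + exp T * near t := by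
    intro t ht
    by_cases h : t ∈ Icc (c - 1) (c + 1)
    · rw [hnear, indicator_of_mem h]
      have : 0 ≤ exp t * (1 + T ^ a) := by positivity
      have : exp t * |t - c| ^ a ≤ exp T * |t - c| ^ a := by gcongr; exact ht.2
      linarith
    · rw [hnear, indicator_of_notMem h, mul_zero, add_zero]
      have h1 : 1 ≤ |t - c| := by
        rw [mem_Icc, not_and_or, not_le, not_le] at h
        rw [le_abs]; rcases h with h | h <;> [right; left] <;> linarith
      have h2 : |t - c| ≤ T := abs_le.2 ⟨by linarith [ht.1], by linarith [ht.2]⟩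
      gcongr
      exact rpow_le_one_add_rpow h1 h2
  have far_integrable : IntervalIntegrable (fun t => exp t * (1 + T ^ a)) volume 0 T :=
    (continuous_exp.mul continuous_const).intervalIntegrable _ _
  have near_integrable' : IntervalIntegrable (fun t => exp T * near t) volume 0 T :=
    near_integrable.intervalIntegrable.const_mul _
  calc ∫ t in (0 : ℝ)..T, exp t * |t - c| ^ a
      ≤ ∫ t in (0 : ℝ)..T, (exp t * (1 + T ^ a) + exp T * near t) :=
        integral_mono_on hT (intervalIntegrable_exp_mul_abs_sub_rpow ha c 0 T)
          (far_integrable.add near_integrable') pointwise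
    _ = (exp T - 1) * (1 + T ^ a) + exp T * ∫ t in (0 : ℝ)..T, near t := by
        rw [integral_add far_integrable near_integrable', intervalIntegral.integral_mul_const,
          intervalIntegral.integral_const_mul, integral_exp, exp_zero]
    _ ≤ exp T * (1 + T ^ a) + exp T * (2 / (a + 1)) := by
        have : 0 ≤ 1 + T ^ a := by positivity
        gcongr
        · linarith
        · rw [integral_of_le hT, ← integral_near]
          exact setIntegral_le_integral near_integrable (Eventually.of_forall near_nonneg)
    _ = exp T * (1 + T ^ a + 2 / (a + 1)) := by ring

lemma norm_integral_exp_mul_integral_exp_mul_le {M T : ℝ} {F : ℝ → ℝ → ℝ} (ha : -1 < a)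
    (hM : 0 ≤ M) (hT : 0 ≤ T)
    (hF : ∀ x ∈ Ioc 0 T, ∀ y ∈ Ioc 0 T, |F x y| ≤ M * (|x| ^ a + |y| ^ a + |y - x| ^ a)) :
    ‖∫ x in (0 : ℝ)..T, exp x * ∫ y in (0 : ℝ)..T, exp y * F x y‖
      ≤ 3 * M * (1 + T ^ a + 2 / (a + 1)) * exp T ^ 2 := by
  set C := 1 + T ^ a + 2 / (a + 1)
  have weighted_le : ∀ c ∈ Icc 0 T, ∫ y in (0 : ℝ)..T, exp y * |y - c| ^ a ≤ exp T * C :=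
    fun c hc => integral_exp_mul_abs_sub_rpow_le ha hc.1 hc.2
  have weighted_le_zero : ∫ y in (0 : ℝ)..T, exp y * |y| ^ a ≤ exp T * C := by
    simpa using weighted_le 0 ⟨le_rfl, hT⟩
  have integrable_zero : IntervalIntegrable (fun y => exp y * |y| ^ a) volume 0 T := by
    simpa using intervalIntegrable_exp_mul_abs_sub_rpow ha 0 0 T
  have integrable_exp : IntervalIntegrable exp volume 0 T := continuous_exp.intervalIntegrable _ _
  have integral_exp_le : ∫ y in (0 : ℝ)..T, exp y ≤ exp T := by
    rw [integral_exp, exp_zero]; linarith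
  have inner : ∀ x ∈ Ioc 0 T,
      ‖∫ y in (0 : ℝ)..T, exp y * F x y‖ ≤ M * exp T * (|x| ^ a + 2 * C) := by
    intro x hx
    calc ‖∫ y in (0 : ℝ)..T, exp y * F x y‖
        ≤ ∫ y in (0 : ℝ)..T, M * (|x| ^ a * exp y + exp y * |y| ^ a + exp y * |y - x| ^ a) := by
          refine norm_integral_le_of_norm_le hT (Eventually.of_forall fun y hy => ?_) ?_
          · rw [norm_mul, norm_of_nonneg (exp_pos y).le, Real.norm_eq_abs]
            calc exp y * |F x y| ≤ exp y * (M * (|x| ^ a + |y| ^ a + |y - x| ^ a)) := by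
                  gcongr; exact hF x hx y hy
              _ = _ := by ring
          · exact ((integrable_exp.const_mul _).add integrable_zero
              |>.add (intervalIntegrable_exp_mul_abs_sub_rpow ha x 0 T)).const_mul M
      _ = M * (|x| ^ a * ∫ y in (0 : ℝ)..T, exp y) + M * (∫ y in (0 : ℝ)..T, exp y * |y| ^ a)
            + M * ∫ y in (0 : ℝ)..T, exp y * |y - x| ^ a := by
          rw [intervalIntegral.integral_const_mul, integral_add ((integrable_exp.const_mul _).add
            integrable_zero) (intervalIntegrable_exp_mul_abs_sub_rpow ha x 0 T),
            integral_add (integrable_exp.const_mul _) integrable_zero,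
            intervalIntegral.integral_const_mul]
          ring
      _ ≤ M * (|x| ^ a * exp T) + M * (exp T * C) + M * (exp T * C) := by
          gcongr
          exact weighted_le x (Ioc_subset_Icc_self hx)
      _ = M * exp T * (|x| ^ a + 2 * C) := by ring
  calc ‖∫ x in (0 : ℝ)..T, exp x * ∫ y in (0 : ℝ)..T, exp y * F x y‖
      ≤ ∫ x in (0 : ℝ)..T, M * exp T * (exp x * |x| ^ a + 2 * C * exp x) := by
        refine norm_integral_le_of_norm_le hT (Eventually.of_forall fun x hx => ?_) ?_
        · rw [norm_mul, norm_of_nonneg (exp_pos x).le]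
          calc exp x * ‖∫ y in (0 : ℝ)..T, exp y * F x y‖
              ≤ exp x * (M * exp T * (|x| ^ a + 2 * C)) := by gcongr; exact inner x hx
            _ = _ := by ring
        · exact (integrable_zero.add (integrable_exp.const_mul _)).const_mul _
    _ = M * exp T * ((∫ x in (0 : ℝ)..T, exp x * |x| ^ a) + 2 * C * ∫ x in (0 : ℝ)..T, exp x) := by
        rw [intervalIntegral.integral_const_mul, integral_add integrable_zero
          (integrable_exp.const_mul _), intervalIntegral.integral_const_mul]
    _ ≤ M * exp T * (exp T * C + 2 * C * exp T) := by
        have ha1 : 0 < a + 1 := by linarith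
        have : 0 ≤ C := by positivity
        gcongr
    _ = 3 * M * C * exp T ^ 2 := by ring

lemma tendsto_rpow_add_sq_div_atTop (ha : a < 1 / 2) (K : ℝ) :
    Tendsto (fun T : ℝ => (T ^ a + K) ^ 2 / T) atTop (𝓝 0) := by
  have h : Tendsto (fun T : ℝ => (T ^ (-(1 / 2 - a)) + K * T ^ (-(1 / 2 : ℝ))) ^ 2)
      atTop (𝓝 0) := by
    simpa using ((tendsto_rpow_neg_atTop (by linarith : 0 < 1 / 2 - a)).add
      ((tendsto_rpow_neg_atTop (by norm_num : (0 : ℝ) < 1 / 2)).const_mul K)).pow 2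
  refine h.congr' ?_
  filter_upwards [eventually_gt_atTop 0] with T hT
  have split : T ^ (-(1 / 2 - a)) = T ^ a * T ^ (-(1 / 2 : ℝ)) := by
    rw [← rpow_add hT]; ring_nf
  have half_sq : (T ^ (-(1 / 2 : ℝ))) ^ 2 = T⁻¹ := by
    rw [← rpow_natCast, ← rpow_mul hT.le]; norm_num [rpow_neg_one]
  rw [split, ← add_mul, mul_pow, half_sq, div_eq_mul_inv]

lemma norm_quadruple_integral_le {M T : ℝ} {F G : ℝ → ℝ → ℝ} (ha : -1 < a) (hM : 0 ≤ M)
    (hT : 0 < T)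
    (hF : ∀ x ∈ Ioc 0 T, ∀ y ∈ Ioc 0 T, |F x y| ≤ M * (|x| ^ a + |y| ^ a + |y - x| ^ a))
    (hG : ∀ x ∈ Ioc 0 T, ∀ y ∈ Ioc 0 T, |G x y| ≤ M * (|x| ^ a + |y| ^ a + |y - x| ^ a)) :
    ‖1 / (T * exp (4 * T)) * ∫ t1 in (0 : ℝ)..T, ∫ t2 in (0 : ℝ)..T, ∫ s1 in (0 : ℝ)..T,
        ∫ s2 in (0 : ℝ)..T, exp (t1 + s1 + t2 + s2) * F t1 t2 * G s1 s2‖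
      ≤ 9 * M ^ 2 * ((T ^ a + (1 + 2 / (a + 1))) ^ 2 / T) := by
  have separate : ∀ t1 t2 s1 s2 : ℝ, exp (t1 + s1 + t2 + s2) * F t1 t2 * G s1 s2 =
      exp t1 * (exp t2 * F t1 t2) * (exp s1 * (exp s2 * G s1 s2)) := by
    intros; simp only [exp_add]; ring
  have exp_four : exp (4 * T) = exp T ^ 4 := by rw [← exp_nat_mul]; norm_num
  have ha1 : 0 < a + 1 := by linarith
  simp only [separate, intervalIntegral.integral_const_mul, intervalIntegral.integral_mul_const]
  calc _ = 1 / (T * exp T ^ 4) * (‖∫ x in (0 : ℝ)..T, exp x * ∫ y in (0 : ℝ)..T, exp y * F x y‖ *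
          ‖∫ x in (0 : ℝ)..T, exp x * ∫ y in (0 : ℝ)..T, exp y * G x y‖) := by
        rw [norm_mul, norm_mul, exp_four, norm_of_nonneg (by positivity)]
    _ ≤ 1 / (T * exp T ^ 4) * ((3 * M * (1 + T ^ a + 2 / (a + 1)) * exp T ^ 2) *
          (3 * M * (1 + T ^ a + 2 / (a + 1)) * exp T ^ 2)) := by
        gcongr
        · exact norm_integral_exp_mul_integral_exp_mul_le ha hM hT.le hF
        · exact norm_integral_exp_mul_integral_exp_mul_le ha hM hT.le hG
    _ = 9 * M ^ 2 * ((T ^ a + (1 + 2 / (a + 1))) ^ 2 / T) := by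
        field_simp; ring

end ExpWeightedRpow

theorem stmt_5 (H : ℝ) (hH : H ∈ Set.Ioo (0:ℝ) (3/4)) :
    Tendsto (fun T : ℝ =>
        (1 / (T * Real.exp (4 * T))) *
          ∫ t1 in (0:ℝ)..T, ∫ t2 in (0:ℝ)..T, ∫ s1 in (0:ℝ)..T, ∫ s2 in (0:ℝ)..T,
            Real.exp (t1 + s1 + t2 + s2) *
              (H * (t2 ^ (2 * H - 1) - Real.sign (t2 - t1) * |t2 - t1| ^ (2 * H - 1))) *
              (H * (s1 ^ (2 * H - 1) - Real.sign (s1 - s2) * |s1 - s2| ^ (2 * H - 1))))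
      atTop (nhds 0) := by
  obtain ⟨hH0, hH34⟩ := hH
  set a := 2 * H - 1 with ha_def
  have ha : -1 < a := by linarith
  have ha' : a < 1 / 2 := by linarith
  have kernel_le : ∀ x u, |H * (x ^ a - Real.sign u * |u| ^ a)| ≤ |H| * (|x| ^ a + |u| ^ a) :=
    fun x u => by rw [abs_mul]; gcongr; exact abs_rpow_sub_sign_mul_abs_rpow_le x u a
  refine squeeze_zero_norm' ?_ (by simpa using
    (tendsto_rpow_add_sq_div_atTop ha' (1 + 2 / (a + 1))).const_mul (9 * H ^ 2))
  filter_upwards [eventually_gt_atTop 0] with T hT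
  rw [← sq_abs H]
  refine norm_quadruple_integral_le ha (abs_nonneg H) hT
    (fun x _ y _ => (kernel_le y (y - x)).trans ?_) (fun x _ y _ => (kernel_le x (x - y)).trans ?_)
  · gcongr; linarith [rpow_nonneg (abs_nonneg x) a]
  · rw [abs_sub_comm x y]; gcongr; linarith [rpow_nonneg (abs_nonneg y) a]
end

section
/- Let $H \in (0, 1/2)$. For $T > 0$ and $x, u \in [0,T]$ define $\varphi_1(x) := \int_x^T \big( (t-x)^{2H-1} - T^{2H-1} \big) \big( (T-t)^{2H-1} - (T-t+x)^{2H-1} \big) dt$, $\varphi_2(x) := \int_x^T \big( (t-x)^{2H-1} - t^{2H-1} \big) (T-t+x)^{2H-1} dt$, and $\varphi_3(x,u) := T^{2H-1} \int_x^T \big( \mathrm{sgn}(u-t)|u-t|^{2H-1} - \mathrm{sgn}(x+u-t)|x+u-t|^{2H-1} \big) dt$. Then $\limsup_{T \to \infty} T^{1-2H} \int_{[0,T]^2} e^{-u-x} \big( |\varphi_1(x)| + |\varphi_2(x)| + |\varphi_3(x,u)| \big) \, dx \, du < \infty$. -/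
open MeasureTheory Real Filter Set intervalIntegral

/-!
Write `a = 2H - 1 ∈ (-1, 0)`. For `0 ≤ x < T`, `φ₁(x)` and `φ₂(x)` are integrals over
`(x, T)` of products of two nonnegative factors. Splitting `(x, T)` at its midpoint, on each half
one factor is bounded by a constant (a difference factor through
`b ^ a - (b + x) ^ a ≤ x ^ (a + 1) / b`) while the other one is integrated exactly; this gives
`|φ₁(x)| + |φ₂(x)| ≲ x ^ (a + 1) (T ^ a + (T - x) ^ a)`. The integrand of `φ₃` is a difference
of two translates of `sign y |y| ^ a`, whose primitive `|y| ^ (a + 1) / (a + 1)` is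
`(a + 1)`-Hölder, so `|φ₃(x, u)| ≲ T ^ a x ^ (a + 1)`.

Against the weight `e ^ (-u - x)`, the term `x ^ (a + 1) T ^ a` integrates to at most
`Γ(a + 2) T ^ a`. The term `x ^ (a + 1) (T - x) ^ a` contributes `≲ T ^ a` from `[0, T / 2]`,
where `(T - x) ^ a ≤ 2 T ^ a`, and `≲ e ^ (-T / 2) T ^ (2a + 2)` from `[T / 2, T]`.
Hence the double integral is `O(T ^ (2H - 1))`.
-/

theorem rpow_sub_rpow_add_le {a b x : ℝ} (ha : -1 ≤ a) (ha0 : a ≤ 0) (hb : 0 < b)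
    (hx : 0 ≤ x) :
    b ^ a - (b + x) ^ a ≤ x ^ (a + 1) / b := by
  have hbx : 0 < b + x := by linarith
  have hlow : b ^ a * (b / (b + x)) ≤ (b + x) ^ a := by
    have h := self_le_rpow_of_le_one (div_nonneg hb.le hbx.le)
      (div_le_one_of_le₀ (by linarith) hbx.le) (by linarith : -a ≤ 1)
    rw [div_rpow hb.le hbx.le, rpow_neg hb.le, rpow_neg hbx.le, inv_div_inv] at h
    calc b ^ a * (b / (b + x)) ≤ b ^ a * ((b + x) ^ a / b ^ a) := by gcongr
      _ = (b + x) ^ a := by field_simp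
  have hfrac : x / (b + x) ≤ (x / b) ^ (a + 1) :=
    calc x / (b + x) ≤ (x / (b + x)) ^ (a + 1) :=
          self_le_rpow_of_le_one (by positivity) (div_le_one_of_le₀ (by linarith) hbx.le)
            (by linarith)
      _ ≤ (x / b) ^ (a + 1) := by gcongr <;> linarith
  calc b ^ a - (b + x) ^ a ≤ b ^ a * (x / (b + x)) := by
        have : b ^ a * (x / (b + x)) = b ^ a - b ^ a * (b / (b + x)) := by field_simp; ring
        linarith
    _ ≤ b ^ a * (x / b) ^ (a + 1) := by gcongr
    _ = x ^ (a + 1) / b := by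
        rw [div_rpow hx hb.le, rpow_add_one hb.ne']
        field_simp

theorem div_two_rpow_le {a s : ℝ} (ha : -1 ≤ a) (hs : 0 ≤ s) : (s / 2) ^ a ≤ 2 * s ^ a := by
  have h2 : (2 : ℝ)⁻¹ ≤ 2 ^ a := by
    rw [← rpow_neg_one]
    exact rpow_le_rpow_of_exponent_le one_le_two ha
  rw [div_rpow hs zero_le_two, div_le_iff₀ (by positivity)]
  nlinarith [rpow_nonneg hs a]

theorem abs_abs_rpow_sub_abs_rpow_le {q : ℝ} (hq0 : 0 ≤ q) (hq1 : q ≤ 1) (A B : ℝ) :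
    |(|A| ^ q - |B| ^ q)| ≤ |A - B| ^ q := by
  have key : ∀ A B : ℝ, |A| ^ q - |B| ^ q ≤ |A - B| ^ q := fun A B => by
    have htri : |A| ≤ |B| + |A - B| := by simpa using abs_add_le B (A - B)
    have := rpow_add_le_add_rpow (abs_nonneg B) (abs_nonneg (A - B)) hq0 hq1
    have := rpow_le_rpow (abs_nonneg A) htri hq0
    linarith
  rw [abs_sub_le_iff]
  exact ⟨key A B, abs_sub_comm A B ▸ key B A⟩

theorem intervalIntegrable_sub_rpow {a : ℝ} (ha : -1 < a) (w c d : ℝ) :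
    IntervalIntegrable (fun t => (t - w) ^ a) volume c d := by
  simpa using (intervalIntegrable_rpow' (a := c - w) (b := d - w) ha).comp_sub_right w

theorem intervalIntegrable_rpow_sub {a : ℝ} (ha : -1 < a) (w c d : ℝ) :
    IntervalIntegrable (fun t => (w - t) ^ a) volume c d := by
  simpa using (intervalIntegrable_rpow' (a := w - c) (b := w - d) ha).comp_sub_left w

theorem integral_sub_rpow {a : ℝ} (ha : -1 < a) (w c d : ℝ) :
    ∫ t in c..d, (t - w) ^ a = ((d - w) ^ (a + 1) - (c - w) ^ (a + 1)) / (a + 1) := by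
  simp [integral_comp_sub_right (fun t => t ^ a), integral_rpow (Or.inl ha)]

theorem integral_rpow_sub {a : ℝ} (ha : -1 < a) (w c d : ℝ) :
    ∫ t in c..d, (w - t) ^ a = ((w - c) ^ (a + 1) - (w - d) ^ (a + 1)) / (a + 1) := by
  simp [integral_comp_sub_left (fun t => t ^ a), integral_rpow (Or.inl ha)]

theorem sign_mul_abs_rpow_neg (a y : ℝ) :
    Real.sign (-y) * |-y| ^ a = -(Real.sign y * |y| ^ a) := by
  simp [Real.sign_neg]

theorem sign_mul_abs_rpow_of_pos {a y : ℝ} (hy : 0 < y) : Real.sign y * |y| ^ a = y ^ a := by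
  rw [Real.sign_of_pos hy, abs_of_pos hy, one_mul]

theorem intervalIntegrable_sign_mul_abs_rpow {a : ℝ} (ha : -1 < a) (c d : ℝ) :
    IntervalIntegrable (fun y => Real.sign y * |y| ^ a) volume c d := by
  have hpos : ∀ d, 0 ≤ d → IntervalIntegrable (fun y => Real.sign y * |y| ^ a) volume 0 d :=
    fun d hd => (intervalIntegrable_rpow' ha).congr fun y hy =>
      (sign_mul_abs_rpow_of_pos (by rw [uIoc_of_le hd] at hy; exact hy.1)).symm
  have hzero : ∀ d, IntervalIntegrable (fun y => Real.sign y * |y| ^ a) volume 0 d := by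
    intro d
    rcases le_total 0 d with hd | hd
    · exact hpos d hd
    · rw [IntervalIntegrable.iff_comp_neg]
      simp only [sign_mul_abs_rpow_neg, neg_zero]
      exact (hpos (-d) (by linarith)).neg
  exact (hzero c).symm.trans (hzero d)

theorem integral_sign_mul_abs_rpow {a : ℝ} (ha : -1 < a) (c d : ℝ) :
    ∫ y in c..d, Real.sign y * |y| ^ a = (|d| ^ (a + 1) - |c| ^ (a + 1)) / (a + 1) := by
  have hpos : ∀ d, 0 ≤ d → ∫ y in 0..d, Real.sign y * |y| ^ a = d ^ (a + 1) / (a + 1) := by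
    intro d hd
    rw [integral_congr_ae (g := fun y => y ^ a) (Eventually.of_forall fun y hy =>
      sign_mul_abs_rpow_of_pos (by rw [uIoc_of_le hd] at hy; exact hy.1)),
      integral_rpow (Or.inl ha), zero_rpow (by linarith), sub_zero]
  have hzero : ∀ d, ∫ y in 0..d, Real.sign y * |y| ^ a = |d| ^ (a + 1) / (a + 1) := by
    intro d
    rcases le_total 0 d with hd | hd
    · rw [abs_of_nonneg hd, hpos d hd]
    · calc ∫ y in 0..d, Real.sign y * |y| ^ a
            = -∫ y in 0..d, Real.sign (-y) * |-y| ^ a := by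
              simp only [sign_mul_abs_rpow_neg, intervalIntegral.integral_neg, neg_neg]
          _ = ∫ y in 0..-d, Real.sign y * |y| ^ a := by
              rw [integral_comp_neg (fun y => Real.sign y * |y| ^ a), neg_zero, integral_symm,
                neg_neg]
          _ = |d| ^ (a + 1) / (a + 1) := by rw [hpos (-d) (by linarith), abs_of_nonpos hd]
  rw [← integral_interval_sub_left (intervalIntegrable_sign_mul_abs_rpow ha 0 d)
    (intervalIntegrable_sign_mul_abs_rpow ha 0 c), hzero, hzero, sub_div]

theorem abs_integral_le_of_forall_Ioo {h F : ℝ → ℝ} {x T : ℝ} (hxT : x ≤ T)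
    (hF : IntervalIntegrable F volume x T) (hbound : ∀ t ∈ Ioo x T, |h t| ≤ F t) :
    |∫ t in x..T, h t| ≤ ∫ t in x..T, F t := by
  rw [← Real.norm_eq_abs]
  refine norm_integral_le_of_norm_le hxT ?_ hF
  filter_upwards [volume.ae_ne T] with t htT ht using hbound t ⟨ht.1, lt_of_le_of_ne ht.2 htT⟩

theorem abs_integral_mul_le_of_split {f g : ℝ → ℝ} {x m T A B : ℝ} (hxT : x ≤ T)
    (hf : IntervalIntegrable f volume x T) (hg : IntervalIntegrable g volume x T)
    (hA : 0 ≤ A) (hB : 0 ≤ B) (hf0 : ∀ t ∈ Ioo x T, 0 ≤ f t)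
    (hg0 : ∀ t ∈ Ioo x T, 0 ≤ g t) (hfA : ∀ t ∈ Ioo x T, m ≤ t → f t ≤ A)
    (hgB : ∀ t ∈ Ioo x T, t ≤ m → g t ≤ B) :
    |∫ t in x..T, f t * g t| ≤ A * (∫ t in x..T, g t) + B * ∫ t in x..T, f t := by
  have hF := (hg.const_mul A).add (hf.const_mul B)
  refine (abs_integral_le_of_forall_Ioo hxT hF fun t ht => ?_).trans_eq ?_
  · rw [abs_of_nonneg (mul_nonneg (hf0 t ht) (hg0 t ht))]
    rcases le_total m t with hmt | htm
    · nlinarith [hfA t ht hmt, hf0 t ht, hg0 t ht]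
    · nlinarith [hgB t ht htm, hf0 t ht, hg0 t ht]
  · rw [intervalIntegral.integral_add (hg.const_mul A) (hf.const_mul B),
      intervalIntegral.integral_const_mul, intervalIntegral.integral_const_mul]

theorem integral_sub_rpow_sub_rpow_le {a x T : ℝ} (ha : -1 < a) (hx : 0 ≤ x) (hxT : x ≤ T) :
    ∫ t in x..T, ((t - x) ^ a - t ^ a) ≤ x ^ (a + 1) / (a + 1) := by
  have hq : 0 < a + 1 := by linarith
  rw [integral_sub (intervalIntegrable_sub_rpow ha x x T) (intervalIntegrable_rpow' ha),
    integral_sub_rpow ha, integral_rpow (Or.inl ha), sub_self, zero_rpow hq.ne', ← sub_div]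
  gcongr
  linarith [rpow_le_rpow (by linarith) (by linarith : T - x ≤ T) hq.le]

theorem integral_rpow_sub_sub_rpow_sub_add_le {a x T : ℝ} (ha : -1 < a) (hx : 0 ≤ x)
    (hxT : x ≤ T) :
    ∫ t in x..T, ((T - t) ^ a - (T - t + x) ^ a) ≤ x ^ (a + 1) / (a + 1) := by
  have hsymm := integral_comp_sub_left (a := x) (b := T) (fun t => (t - x) ^ a - t ^ a) (T + x)
  simp only [add_sub_cancel_left, add_sub_cancel_right] at hsymm
  calc _ = ∫ t in x..T, ((T + x - t - x) ^ a - (T + x - t) ^ a) := by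
        congr 1 with t
        rw [show T + x - t - x = T - t by ring, show T + x - t = T - t + x by ring]
    _ ≤ x ^ (a + 1) / (a + 1) := hsymm ▸ integral_sub_rpow_sub_rpow_le ha hx hxT

theorem integral_rpow_sub_add_le {a x T : ℝ} (ha : -1 < a) (ha0 : a ≤ 0) (hx : 0 ≤ x)
    (hxT : x ≤ T) :
    ∫ t in x..T, (T - t + x) ^ a ≤ (T - x) ^ (a + 1) / (a + 1) := by
  have hq : 0 < a + 1 := by linarith
  simp only [sub_add_eq_add_sub]
  rw [integral_rpow_sub ha, add_sub_cancel_right, add_sub_cancel_left]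
  gcongr
  have := rpow_add_le_add_rpow (by linarith : 0 ≤ T - x) hx hq.le (by linarith)
  rw [sub_add_cancel] at this
  linarith

noncomputable def phi1 (a T x : ℝ) : ℝ :=
  ∫ t in x..T, ((t - x) ^ a - T ^ a) * ((T - t) ^ a - (T - t + x) ^ a)

noncomputable def phi2 (a T x : ℝ) : ℝ :=
  ∫ t in x..T, ((t - x) ^ a - t ^ a) * (T - t + x) ^ a

noncomputable def phi3 (a T x u : ℝ) : ℝ :=
  T ^ a * ∫ t in x..T, (Real.sign (u - t) * |u - t| ^ a -
    Real.sign (x + u - t) * |x + u - t| ^ a)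

theorem abs_phi1_le {a T x : ℝ} (ha : -1 < a) (ha0 : a ≤ 0) (hx : 0 ≤ x) (hxT : x < T) :
    |phi1 a T x| ≤ 4 / (a + 1) * x ^ (a + 1) * (T - x) ^ a := by
  have hq : 0 < a + 1 := by linarith
  have hs : 0 < (T - x) / 2 := by linarith
  have hf := (intervalIntegrable_sub_rpow ha x x T).sub (intervalIntegrable_const (c := T ^ a))
  have hg := (intervalIntegrable_rpow_sub ha T x T).sub
    (by simpa only [sub_add_eq_add_sub] using intervalIntegrable_rpow_sub ha (T + x) x T :
      IntervalIntegrable (fun t => (T - t + x) ^ a) volume x T)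
  have hsplit := abs_integral_mul_le_of_split (m := (x + T) / 2) (A := ((T - x) / 2) ^ a)
    (B := x ^ (a + 1) / ((T - x) / 2)) hxT.le hf hg (rpow_nonneg hs.le _) (by positivity)
    (fun t ht => sub_nonneg.2
      (rpow_le_rpow_of_nonpos (by linarith [ht.1]) (by linarith [ht.2]) ha0))
    (fun t ht => sub_nonneg.2 (rpow_le_rpow_of_nonpos (by linarith [ht.2]) (by linarith) ha0))
    (fun t ht hmt => by
      have := rpow_le_rpow_of_nonpos hs (by linarith : (T - x) / 2 ≤ t - x) ha0
      linarith [rpow_nonneg (by linarith [ht.2] : 0 ≤ T) a])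
    (fun t ht htm => by
      refine (rpow_sub_rpow_add_le (b := T - t) ha.le ha0 (by linarith [ht.2]) hx).trans ?_
      exact div_le_div_of_nonneg_left (by positivity) hs (by linarith))
  have hintf : ∫ t in x..T, ((t - x) ^ a - T ^ a) ≤ (T - x) ^ (a + 1) / (a + 1) := by
    rw [integral_sub (intervalIntegrable_sub_rpow ha x x T) intervalIntegrable_const,
      integral_sub_rpow ha, sub_self, zero_rpow hq.ne', sub_zero, intervalIntegral.integral_const,
      smul_eq_mul]
    nlinarith [rpow_nonneg (by linarith : 0 ≤ T) a]
  have hs' : T - x ≠ 0 := by linarith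
  unfold phi1
  refine hsplit.trans ?_
  calc _ ≤ ((T - x) / 2) ^ a * (x ^ (a + 1) / (a + 1))
        + x ^ (a + 1) / ((T - x) / 2) * ((T - x) ^ (a + 1) / (a + 1)) := by
          gcongr
          exact integral_rpow_sub_sub_rpow_sub_add_le ha hx hxT.le
    _ ≤ 2 * (T - x) ^ a * (x ^ (a + 1) / (a + 1))
        + x ^ (a + 1) / ((T - x) / 2) * ((T - x) ^ (a + 1) / (a + 1)) := by
          gcongr
          exact div_two_rpow_le ha.le (by linarith)
    _ = 4 / (a + 1) * x ^ (a + 1) * (T - x) ^ a := by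
          rw [rpow_add_one hs']
          field_simp
          ring

theorem abs_phi2_le {a T x : ℝ} (ha : -1 < a) (ha0 : a ≤ 0) (hx : 0 ≤ x) (hxT : x < T) :
    |phi2 a T x| ≤ 2 / (a + 1) * x ^ (a + 1) * (T ^ a + (T - x) ^ a) := by
  have hq : 0 < a + 1 := by linarith
  have hs : 0 < (T - x) / 2 := by linarith
  have hg : IntervalIntegrable (fun t => (T - t + x) ^ a) volume x T := by
    simpa only [sub_add_eq_add_sub] using intervalIntegrable_rpow_sub ha (T + x) x T
  have hsplit := abs_integral_mul_le_of_split (m := (x + T) / 2)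
    (A := x ^ (a + 1) / ((T - x) / 2)) (B := (T / 2) ^ a) hxT.le
    ((intervalIntegrable_sub_rpow ha x x T).sub (intervalIntegrable_rpow' ha)) hg
    (by positivity) (rpow_nonneg (by linarith) _)
    (fun t ht => sub_nonneg.2 (rpow_le_rpow_of_nonpos (by linarith [ht.1]) (by linarith) ha0))
    (fun t ht => rpow_nonneg (by linarith [ht.2]) _)
    (fun t ht hmt => by
      have := rpow_sub_rpow_add_le (b := t - x) ha.le ha0 (by linarith [ht.1]) hx
      rw [sub_add_cancel] at this
      exact this.trans (div_le_div_of_nonneg_left (by positivity) hs (by linarith)))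
    (fun t ht htm => rpow_le_rpow_of_nonpos (by linarith) (by linarith) ha0)
  have hs' : T - x ≠ 0 := by linarith
  unfold phi2
  refine hsplit.trans ?_
  calc _ ≤ x ^ (a + 1) / ((T - x) / 2) * ((T - x) ^ (a + 1) / (a + 1))
        + (T / 2) ^ a * (x ^ (a + 1) / (a + 1)) := by
          gcongr
          · exact integral_rpow_sub_add_le ha ha0 hx hxT.le
          · exact rpow_nonneg (by linarith) _
          · exact integral_sub_rpow_sub_rpow_le ha hx hxT.le
    _ ≤ x ^ (a + 1) / ((T - x) / 2) * ((T - x) ^ (a + 1) / (a + 1))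
        + 2 * T ^ a * (x ^ (a + 1) / (a + 1)) := by
          gcongr
          exact div_two_rpow_le ha.le (by linarith)
    _ = 2 / (a + 1) * x ^ (a + 1) * (T ^ a + (T - x) ^ a) := by
          rw [rpow_add_one hs']
          field_simp
          ring

theorem abs_phi3_le {a T : ℝ} (ha : -1 < a) (ha0 : a ≤ 0) (hT : 0 ≤ T) (x u : ℝ) :
    |phi3 a T x u| ≤ 2 * T ^ a * |x| ^ (a + 1) / (a + 1) := by
  have hq : 0 < a + 1 := by linarith
  have hint : ∀ w, IntervalIntegrable (fun t => Real.sign (w - t) * |w - t| ^ a) volume x T :=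
    fun w => by
      simpa using (intervalIntegrable_sign_mul_abs_rpow ha (w - x) (w - T)).comp_sub_left w
  have heval : ∀ w, ∫ t in x..T, Real.sign (w - t) * |w - t| ^ a
      = (|w - x| ^ (a + 1) - |w - T| ^ (a + 1)) / (a + 1) := fun w => by
    rw [integral_comp_sub_left (fun y => Real.sign y * |y| ^ a) w,
      integral_sign_mul_abs_rpow ha]
  have h1 := abs_abs_rpow_sub_abs_rpow_le hq.le (by linarith) (u - x) u
  have h2 := abs_abs_rpow_sub_abs_rpow_le hq.le (by linarith) (x + u - T) (u - T)
  rw [show u - x - u = -x by ring, abs_neg] at h1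
  rw [show x + u - T - (u - T) = x by ring] at h2
  have hsum : |(|u - x| ^ (a + 1) - |u - T| ^ (a + 1)) - (|u| ^ (a + 1) - |x + u - T| ^ (a + 1))|
      ≤ 2 * |x| ^ (a + 1) :=
    calc _ = |(|u - x| ^ (a + 1) - |u| ^ (a + 1))
            + (|x + u - T| ^ (a + 1) - |u - T| ^ (a + 1))| := by ring_nf
      _ ≤ _ := abs_add_le _ _
      _ ≤ 2 * |x| ^ (a + 1) := by linarith
  rw [phi3, integral_sub (hint u) (hint (x + u)), heval, heval, add_sub_cancel_left, abs_mul,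
    abs_of_nonneg (rpow_nonneg hT a), ← sub_div, abs_div, abs_of_pos hq]
  calc _ ≤ T ^ a * (2 * |x| ^ (a + 1) / (a + 1)) := by gcongr
    _ = _ := by ring

theorem abs_phi1_add_abs_phi2_add_abs_phi3_le {a T x : ℝ} (ha : -1 < a) (ha0 : a ≤ 0)
    (hx : 0 ≤ x) (hxT : x < T) (u : ℝ) :
    |phi1 a T x| + |phi2 a T x| + |phi3 a T x u|
      ≤ 6 / (a + 1) * (x ^ (a + 1) * (T ^ a + (T - x) ^ a)) := by
  have h1 := abs_phi1_le ha ha0 hx hxT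
  have h2 := abs_phi2_le ha ha0 hx hxT
  have h3 := abs_phi3_le (T := T) ha ha0 (by linarith) x u
  rw [abs_of_nonneg hx] at h3
  have hpos : 0 ≤ x ^ (a + 1) * T ^ a / (a + 1) :=
    div_nonneg (mul_nonneg (rpow_nonneg hx _) (rpow_nonneg (by linarith) _)) (by linarith)
  have e : 6 / (a + 1) * (x ^ (a + 1) * (T ^ a + (T - x) ^ a))
      = 4 / (a + 1) * x ^ (a + 1) * (T - x) ^ a
        + 2 / (a + 1) * x ^ (a + 1) * (T ^ a + (T - x) ^ a)
        + 2 * T ^ a * x ^ (a + 1) / (a + 1) + 2 * (x ^ (a + 1) * T ^ a / (a + 1)) := by ring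
  linarith

theorem continuous_exp_neg_mul_rpow {q : ℝ} (hq : 0 ≤ q) :
    Continuous fun x : ℝ => exp (-x) * x ^ q := by
  have := continuous_id.rpow_const (p := q) fun _ => Or.inr hq
  fun_prop

theorem integral_exp_neg_mul_rpow_le_Gamma {q T : ℝ} (hq : 0 ≤ q) (hT : 0 ≤ T) :
    ∫ x in 0..T, exp (-x) * x ^ q ≤ Gamma (q + 1) := by
  have hint := GammaIntegral_convergent (by linarith : 0 < q + 1)
  rw [add_sub_cancel_right] at hint
  rw [Gamma_eq_integral (by linarith), add_sub_cancel_right, integral_of_le hT]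
  refine setIntegral_mono_set hint ?_ Ioc_subset_Ioi_self.eventuallyLE
  filter_upwards [ae_restrict_mem measurableSet_Ioi] with x hx
  exact mul_nonneg (exp_pos _).le (rpow_nonneg (le_of_lt hx) _)

theorem sq_mul_exp_neg_half_le {T : ℝ} (hT : 0 ≤ T) : T ^ 2 * exp (-(T / 2)) ≤ 8 := by
  have h := Real.pow_div_factorial_le_exp (x := T / 2) (by linarith) 2
  rw [exp_neg, ← div_eq_mul_inv, div_le_iff₀ (exp_pos _)]
  norm_num [Nat.factorial] at h
  linarith

theorem integral_exp_neg_mul_rpow_mul_rpow_sub_le {a T : ℝ} (ha : -1 < a) (ha0 : a ≤ 0)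
    (hT : 1 ≤ T) :
    ∫ x in 0..T, exp (-x) * x ^ (a + 1) * (T - x) ^ a
      ≤ (2 * Gamma (a + 2) + 8 / (a + 1)) * T ^ a := by
  have hq : 0 < a + 1 := by linarith
  have hcont := continuous_exp_neg_mul_rpow hq.le
  have hint : ∀ c d,
      IntervalIntegrable (fun x => exp (-x) * x ^ (a + 1) * (T - x) ^ a) volume c d :=
    fun c d => (intervalIntegrable_rpow_sub ha T c d).continuousOn_mul hcont.continuousOn
  have hlower : ∫ x in 0..T / 2, exp (-x) * x ^ (a + 1) * (T - x) ^ a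
      ≤ 2 * Gamma (a + 2) * T ^ a := by
    calc _ ≤ ∫ x in 0..T / 2, exp (-x) * x ^ (a + 1) * (2 * T ^ a) := by
          refine integral_mono_on (by linarith) (hint _ _)
            ((hcont.intervalIntegrable _ _).mul_const _) fun x hx => ?_
          have : (T - x) ^ a ≤ (T / 2) ^ a :=
            rpow_le_rpow_of_nonpos (by linarith) (by linarith [hx.2]) ha0
          have := div_two_rpow_le ha.le (by linarith : 0 ≤ T)
          gcongr
          · exact mul_nonneg (exp_pos _).le (rpow_nonneg hx.1 _)
          · linarith
      _ ≤ 2 * Gamma (a + 2) * T ^ a := by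
          rw [intervalIntegral.integral_mul_const]
          have := integral_exp_neg_mul_rpow_le_Gamma hq.le (by linarith : 0 ≤ T / 2)
          rw [show a + 1 + 1 = a + 2 by ring] at this
          nlinarith [rpow_nonneg (by linarith : 0 ≤ T) a]
  have hupper : ∫ x in T / 2..T, exp (-x) * x ^ (a + 1) * (T - x) ^ a
      ≤ 8 / (a + 1) * T ^ a := by
    have hT0 : 0 < T := by linarith
    have hpow : T ^ (a + 1) * T ^ (a + 1) = T ^ a * T ^ (a + 2) := by
      rw [← rpow_add hT0, ← rpow_add hT0]
      ring_nf
    have hpow2 : T ^ (a + 2) ≤ T ^ 2 := by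
      rw [← rpow_two]
      exact rpow_le_rpow_of_exponent_le hT (by linarith)
    calc _ ≤ ∫ x in T / 2..T, exp (-(T / 2)) * T ^ (a + 1) * (T - x) ^ a := by
          refine integral_mono_on (by linarith) (hint _ _)
            ((intervalIntegrable_rpow_sub ha T _ _).const_mul _) fun x hx => ?_
          have hx0 : 0 ≤ x := by linarith [hx.1]
          gcongr
          · exact rpow_nonneg (by linarith [hx.2]) _
          · linarith [hx.1]
          · exact hx.2
      _ = exp (-(T / 2)) * T ^ (a + 1) * ((T / 2) ^ (a + 1) / (a + 1)) := by
          rw [intervalIntegral.integral_const_mul, integral_rpow_sub ha, sub_self,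
            zero_rpow hq.ne', sub_zero, show T - T / 2 = T / 2 by ring]
      _ ≤ exp (-(T / 2)) * T ^ (a + 1) * (T ^ (a + 1) / (a + 1)) := by
          gcongr
          linarith
      _ = T ^ a * (T ^ (a + 2) * exp (-(T / 2))) / (a + 1) := by
          rw [← mul_div_assoc, mul_assoc, hpow]
          ring
      _ ≤ T ^ a * (T ^ 2 * exp (-(T / 2))) / (a + 1) := by gcongr
      _ ≤ T ^ a * 8 / (a + 1) := by gcongr; exact sq_mul_exp_neg_half_le hT0.le
      _ = 8 / (a + 1) * T ^ a := by ring
  rw [← integral_add_adjacent_intervals (hint 0 (T / 2)) (hint (T / 2) T)]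
  linarith

theorem abs_integral_exp_neg_sub_mul_le {F : ℝ → ℝ} {T c : ℝ} (hT : 0 ≤ T) (x : ℝ)
    (hF : ∀ u, |F u| ≤ c) :
    |∫ u in 0..T, exp (-u - x) * F u| ≤ exp (-x) * c := by
  have hexp : Continuous fun u => exp (-u - x) := by fun_prop
  refine (abs_integral_le_of_forall_Ioo hT ((hexp.intervalIntegrable 0 T).mul_const c)
    fun u _ => ?_).trans ?_
  · rw [abs_mul, abs_of_pos (exp_pos _)]
    exact mul_le_mul_of_nonneg_left (hF u) (exp_pos _).le
  · have hc : 0 ≤ c := (abs_nonneg _).trans (hF 0)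
    have hsub := integral_comp_sub_left (a := 0) (b := T) exp (-x)
    simp only [sub_zero] at hsub
    simp_rw [intervalIntegral.integral_mul_const, show ∀ u, -u - x = -x - u from fun u => by ring,
      hsub, integral_exp]
    exact mul_le_mul_of_nonneg_right (by linarith [exp_pos (-x - T)]) hc

theorem abs_integral_integral_exp_neg_le {G : ℝ → ℝ → ℝ} {a T K : ℝ} (ha : -1 < a)
    (ha0 : a ≤ 0) (hT : 1 ≤ T) (hK : 0 ≤ K)
    (hG : ∀ x ∈ Ioo 0 T, ∀ u, |G x u| ≤ K * (x ^ (a + 1) * (T ^ a + (T - x) ^ a))) :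
    |∫ x in 0..T, ∫ u in 0..T, exp (-u - x) * G x u|
      ≤ K * (3 * Gamma (a + 2) + 8 / (a + 1)) * T ^ a := by
  have hq : 0 < a + 1 := by linarith
  have hcont := continuous_exp_neg_mul_rpow hq.le
  have h1 := hcont.intervalIntegrable (μ := volume) 0 T
  have h2 := (intervalIntegrable_rpow_sub ha T 0 T).continuousOn_mul hcont.continuousOn
  refine (abs_integral_le_of_forall_Ioo (by linarith)
    (((h1.const_mul (T ^ a)).add h2).const_mul K) fun x hx =>
      (abs_integral_exp_neg_sub_mul_le (by linarith) x (hG x hx)).trans_eq ?_).trans ?_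
  · ring
  · rw [intervalIntegral.integral_const_mul, intervalIntegral.integral_add (h1.const_mul _) h2,
      intervalIntegral.integral_const_mul]
    have hΓ := integral_exp_neg_mul_rpow_le_Gamma hq.le (by linarith : 0 ≤ T)
    have hsplit := integral_exp_neg_mul_rpow_mul_rpow_sub_le ha ha0 hT
    rw [show a + 1 + 1 = a + 2 by ring] at hΓ
    have hTa := rpow_nonneg (by linarith : 0 ≤ T) a
    calc _ ≤ K * (T ^ a * Gamma (a + 2) + (2 * Gamma (a + 2) + 8 / (a + 1)) * T ^ a) := by
          gcongr
      _ = _ := by ring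

theorem stmt_11 (H : ℝ) (hH : H ∈ Set.Ioo (0:ℝ) (1/2))
    (φ1 φ2 : ℝ → ℝ → ℝ) (φ3 : ℝ → ℝ → ℝ → ℝ)
    (hφ1 : ∀ T x : ℝ, φ1 T x =
      ∫ t in x..T, ((t - x) ^ (2 * H - 1) - T ^ (2 * H - 1)) *
        ((T - t) ^ (2 * H - 1) - (T - t + x) ^ (2 * H - 1)))
    (hφ2 : ∀ T x : ℝ, φ2 T x =
      ∫ t in x..T, ((t - x) ^ (2 * H - 1) - t ^ (2 * H - 1)) * (T - t + x) ^ (2 * H - 1))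
    (hφ3 : ∀ T x u : ℝ, φ3 T x u = T ^ (2 * H - 1) *
      ∫ t in x..T, (Real.sign (u - t) * |u - t| ^ (2 * H - 1) -
        Real.sign (x + u - t) * |x + u - t| ^ (2 * H - 1))) :
    ∃ C : ℝ, ∀ᶠ T : ℝ in atTop,
      T ^ (1 - 2 * H) * (∫ x in (0:ℝ)..T, ∫ u in (0:ℝ)..T,
        Real.exp (-u - x) * (|φ1 T x| + |φ2 T x| + |φ3 T x u|)) ≤ C := by
  obtain ⟨hH0, hH1⟩ := hH
  have ha : -1 < 2 * H - 1 := by linarith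
  have ha0 : 2 * H - 1 ≤ 0 := by linarith
  refine ⟨6 / (2 * H - 1 + 1) * (3 * Gamma (2 * H - 1 + 2) + 8 / (2 * H - 1 + 1)), ?_⟩
  filter_upwards [eventually_ge_atTop 1] with T hT
  have hbound := abs_integral_integral_exp_neg_le
    (G := fun x u => |φ1 T x| + |φ2 T x| + |φ3 T x u|) (K := 6 / (2 * H - 1 + 1))
    ha ha0 hT (div_nonneg (by norm_num) (by linarith)) fun x hx u => by
      rw [hφ1, hφ2, hφ3, abs_of_nonneg (by positivity)]
      exact abs_phi1_add_abs_phi2_add_abs_phi3_le ha ha0 hx.1.le hx.2 u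
  have hscale : T ^ (1 - 2 * H) * T ^ (2 * H - 1) = 1 := by
    rw [← rpow_add (by linarith), show 1 - 2 * H + (2 * H - 1) = 0 by ring, rpow_zero]
  calc _ ≤ T ^ (1 - 2 * H) * (6 / (2 * H - 1 + 1) * (3 * Gamma (2 * H - 1 + 2)
        + 8 / (2 * H - 1 + 1)) * T ^ (2 * H - 1)) := by
        gcongr
        exact (le_abs_self _).trans hbound
    _ = _ := by
        linear_combination
          6 / (2 * H - 1 + 1) * (3 * Gamma (2 * H - 1 + 2) + 8 / (2 * H - 1 + 1)) * hscale
end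

section
/- Let $H \in (0, 1/2)$ and for $T > 0$ define $K_1(T) := \iiint_{\{0 < u < x < t \leq x+u, \; t > T\}} e^{-u-x} (t-x)^{2H-1} (t-u)^{2H-1} \, dt \, dx \, du$. Then there exists a constant $c > 0$ such that for all $T \geq 1$, $K_1(T) \leq c \, T^{4H} e^{-T}$. -/
/-!
On the domain, `t ≤ x + u` gives `e^{-u-x} ≤ e^{-t}`. Dropping the constraints that tie
`x` to `u`, the inner integral factors as `(∫₀ᵗ (t - x)^{2H-1} dx)² = t^{4H} / (4H²)`.
For `t ≥ T ≥ 1` we have `t ≤ T (1 + (t - T))` and `4H ≤ 2`, so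
`t^{4H} ≤ T^{4H} (1 + (t - T))²`; since `∫_T^∞ (1 + (t - T))² e^{-t} dt = 5 e^{-T}`,
the constant `c = 5 / (4H²)` works.
-/

open MeasureTheory Real Filter Topology Set

noncomputable def powKernel (p t x : ℝ) : ENNReal :=
  (Ioo 0 t).indicator (fun x => ENNReal.ofReal ((t - x) ^ p)) x

lemma measurable_powKernel (p t : ℝ) : Measurable (powKernel p t) :=
  Measurable.indicator (by fun_prop) measurableSet_Ioo

lemma lintegral_powKernel {p t : ℝ} (hp : -1 < p) (ht : 0 < t) :
    ∫⁻ x, powKernel p t x = ENNReal.ofReal (t ^ (p + 1) / (p + 1)) := by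
  have hint : IntegrableOn (fun x => (t - x) ^ p) (Ioc 0 t) := by
    rw [← intervalIntegrable_iff_integrableOn_Ioc_of_le ht.le]
    simpa using
      (intervalIntegral.intervalIntegrable_rpow' hp (a := 0) (b := t)).comp_sub_left t |>.symm
  have hnonneg : 0 ≤ᵐ[volume.restrict (Ioc 0 t)] fun x => (t - x) ^ p := by
    filter_upwards [ae_restrict_mem measurableSet_Ioc] with x hx
    exact rpow_nonneg (sub_nonneg.2 hx.2) _
  unfold powKernel
  rw [lintegral_indicator measurableSet_Ioo, setLIntegral_congr Ioo_ae_eq_Ioc,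
    ← ofReal_integral_eq_lintegral_ofReal hint hnonneg, ← intervalIntegral.integral_of_le ht.le,
    intervalIntegral.integral_comp_sub_left (fun x => x ^ p), sub_self, sub_zero,
    integral_rpow (Or.inl hp), zero_rpow (by linarith), sub_zero]

-- `t ↦ -((t - T) ^ 2 + 4 (t - T) + 5) e^{-t}` is an antiderivative of the integrand.
lemma lintegral_Ioi_one_add_sub_sq_mul_exp_neg (T : ℝ) :
    ∫⁻ t in Ioi T, ENNReal.ofReal ((1 + (t - T)) ^ 2 * exp (-t)) =
      ENNReal.ofReal (5 * exp (-T)) := by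
  set G : ℝ → ℝ := fun t => -(((t - T) ^ 2 + 4 * (t - T) + 5) * exp (-t)) with hG
  have hderiv : ∀ t ∈ Ici T, HasDerivAt G ((1 + (t - T)) ^ 2 * exp (-t)) t := by
    intro t _
    have hs : HasDerivAt (fun s : ℝ => s - T) 1 t := (hasDerivAt_id t).sub_const T
    have hP := ((hs.pow 2).add (hs.const_mul 4)).add_const 5
    have hE : HasDerivAt (fun s : ℝ => exp (-s)) (-exp (-t)) t := by
      simpa using (hasDerivAt_id t).neg.exp
    exact (hP.mul hE).neg.congr_deriv (by norm_num; ring)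
  have hpos : ∀ t ∈ Ioi T, 0 ≤ (1 + (t - T)) ^ 2 * exp (-t) := fun t _ => by positivity
  have hlim : Tendsto G atTop (𝓝 0) := by
    have h := (((tendsto_pow_mul_exp_neg_atTop_nhds_zero 2).add
      ((tendsto_pow_mul_exp_neg_atTop_nhds_zero 1).const_mul (4 - 2 * T))).add
      (tendsto_exp_neg_atTop_nhds_zero.const_mul (T ^ 2 - 4 * T + 5))).neg
    simp only [mul_zero, add_zero, neg_zero] at h
    refine h.congr fun t => ?_
    simp only [hG]
    ring
  rw [← ofReal_integral_eq_lintegral_ofReal (integrableOn_Ioi_deriv_of_nonneg' hderiv hpos hlim)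
    ((ae_restrict_mem measurableSet_Ioi).mono hpos),
    integral_Ioi_of_hasDerivAt_of_nonneg' hderiv hpos hlim]
  simp only [hG, sub_self]
  ring_nf

lemma rpow_le_rpow_mul_one_add_sub_sq {q T t : ℝ} (hq0 : 0 ≤ q) (hq2 : q ≤ 2) (hT : 1 ≤ T)
    (hTt : T ≤ t) : t ^ q ≤ T ^ q * (1 + (t - T)) ^ 2 :=
  calc t ^ q ≤ (T * (1 + (t - T))) ^ q :=
        rpow_le_rpow (by linarith) (by nlinarith) hq0
    _ = T ^ q * (1 + (t - T)) ^ q := mul_rpow (by linarith) (by linarith)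
    _ ≤ T ^ q * (1 + (t - T)) ^ (2 : ℝ) := by
        gcongr
        linarith
    _ = T ^ q * (1 + (t - T)) ^ 2 := by rw [rpow_two]

lemma lintegral_Ioi_rpow_mul_exp_neg_le {q T : ℝ} (hq0 : 0 ≤ q) (hq2 : q ≤ 2) (hT : 1 ≤ T) :
    ∫⁻ t in Ioi T, ENNReal.ofReal (t ^ q * exp (-t)) ≤
      ENNReal.ofReal (5 * T ^ q * exp (-T)) :=
  calc ∫⁻ t in Ioi T, ENNReal.ofReal (t ^ q * exp (-t))
      ≤ ∫⁻ t in Ioi T,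
          ENNReal.ofReal (T ^ q) * ENNReal.ofReal ((1 + (t - T)) ^ 2 * exp (-t)) := by
        refine setLIntegral_mono' measurableSet_Ioi fun t ht => ?_
        rw [← ENNReal.ofReal_mul (by positivity), ← mul_assoc]
        gcongr
        exact rpow_le_rpow_mul_one_add_sub_sq hq0 hq2 hT (le_of_lt ht)
    _ = ENNReal.ofReal (5 * T ^ q * exp (-T)) := by
        rw [lintegral_const_mul' _ _ ENNReal.ofReal_ne_top,
          lintegral_Ioi_one_add_sub_sq_mul_exp_neg, ← ENNReal.ofReal_mul (by positivity)]
        ring_nf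

-- Points are `(t, x, u)`.
def k1Domain (T : ℝ) : Set (ℝ × ℝ × ℝ) :=
  {p | 0 < p.2.2 ∧ p.2.2 < p.2.1 ∧ p.2.1 < p.1 ∧ p.1 ≤ p.2.1 + p.2.2 ∧ T < p.1}

lemma measurableSet_k1Domain (T : ℝ) : MeasurableSet (k1Domain T) := by
  unfold k1Domain
  measurability

noncomputable def k1Majorant (T p : ℝ) (q : ℝ × ℝ × ℝ) : ENNReal :=
  (Ioi T).indicator (fun t => ENNReal.ofReal (exp (-t))) q.1 *
    powKernel p q.1 q.2.1 * powKernel p q.1 q.2.2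

lemma ofReal_norm_le_k1Majorant {T p : ℝ} {q : ℝ × ℝ × ℝ} (hq : q ∈ k1Domain T) :
    ENNReal.ofReal ‖exp (-q.2.2 - q.2.1) * (q.1 - q.2.1) ^ p * (q.1 - q.2.2) ^ p‖ ≤
      k1Majorant T p q := by
  obtain ⟨t, x, u⟩ := q
  obtain ⟨hu, hux, hxt, htxu, hTt⟩ := hq
  have hx : x ∈ Ioo 0 t := ⟨hu.trans hux, hxt⟩
  have hu' : u ∈ Ioo 0 t := ⟨hu, hux.trans hxt⟩
  simp only [k1Majorant, powKernel, indicator_of_mem (show t ∈ Ioi T from hTt),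
    indicator_of_mem hx, indicator_of_mem hu']
  have hxp : 0 ≤ (t - x) ^ p := rpow_nonneg (by linarith) _
  have hup : 0 ≤ (t - u) ^ p := rpow_nonneg (by linarith) _
  rw [Real.norm_of_nonneg (by positivity), ENNReal.ofReal_mul (by positivity),
    ENNReal.ofReal_mul (by positivity)]
  gcongr
  linarith

lemma setLIntegral_ofReal_norm_le_lintegral_k1Majorant (T p : ℝ) :
    ∫⁻ q in k1Domain T,
        ENNReal.ofReal ‖exp (-q.2.2 - q.2.1) * (q.1 - q.2.1) ^ p * (q.1 - q.2.2) ^ p‖ ≤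
      ∫⁻ q, k1Majorant T p q :=
  (setLIntegral_mono' (measurableSet_k1Domain T) fun _ hq => ofReal_norm_le_k1Majorant hq).trans
    (setLIntegral_le_lintegral _ _)

lemma lintegral_k1Majorant_le_lintegral_sq (T p : ℝ) :
    ∫⁻ q, k1Majorant T p q ≤
      ∫⁻ t in Ioi T, ENNReal.ofReal (exp (-t)) * (∫⁻ x, powKernel p t x) ^ 2 :=
  calc ∫⁻ q, k1Majorant T p q
      ≤ ∫⁻ t, ∫⁻ x, ∫⁻ u, k1Majorant T p (t, x, u) := by
        rw [Measure.volume_eq_prod]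
        refine (lintegral_prod_le _).trans (lintegral_mono fun t => ?_)
        rw [Measure.volume_eq_prod]
        exact lintegral_prod_le _
    _ = ∫⁻ t, (Ioi T).indicator
          (fun t => ENNReal.ofReal (exp (-t)) * (∫⁻ x, powKernel p t x) ^ 2) t := by
        refine lintegral_congr fun t => ?_
        simp only [k1Majorant, indicator_mul_left, lintegral_const_mul _ (measurable_powKernel p t)]
        rw [lintegral_mul_const _ ((measurable_powKernel p t).const_mul _),
          lintegral_const_mul _ (measurable_powKernel p t)]
        ring
    _ = _ := lintegral_indicator measurableSet_Ioi _

lemma lintegral_k1Majorant_le {H T : ℝ} (hH0 : 0 < H) (hH : H ≤ 1 / 2) (hT : 1 ≤ T) :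
    ∫⁻ q, k1Majorant T (2 * H - 1) q ≤
      ENNReal.ofReal (5 / (4 * H ^ 2) * T ^ (4 * H) * exp (-T)) :=
  calc ∫⁻ q, k1Majorant T (2 * H - 1) q
      ≤ ∫⁻ t in Ioi T,
          ENNReal.ofReal (exp (-t)) * (∫⁻ x, powKernel (2 * H - 1) t x) ^ 2 :=
        lintegral_k1Majorant_le_lintegral_sq T _
    _ = ∫⁻ t in Ioi T, ENNReal.ofReal (1 / (4 * H ^ 2)) *
          ENNReal.ofReal (t ^ (4 * H) * exp (-t)) := by
        refine setLIntegral_congr_fun measurableSet_Ioi fun t (ht : T < t) => ?_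
        have ht0 : 0 < t := by linarith
        rw [lintegral_powKernel (by linarith) ht0, sub_add_cancel, ← ENNReal.ofReal_pow
          (by positivity), ← ENNReal.ofReal_mul (by positivity),
          ← ENNReal.ofReal_mul (by positivity), div_pow, ← rpow_natCast, ← rpow_mul ht0.le]
        congr 1
        field_simp
        ring_nf
    _ ≤ ENNReal.ofReal (1 / (4 * H ^ 2)) * ENNReal.ofReal (5 * T ^ (4 * H) * exp (-T)) := by
        rw [lintegral_const_mul' _ _ ENNReal.ofReal_ne_top]
        gcongr
        exact lintegral_Ioi_rpow_mul_exp_neg_le (by positivity) (by linarith) hT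
    _ = ENNReal.ofReal (5 / (4 * H ^ 2) * T ^ (4 * H) * exp (-T)) := by
        rw [← ENNReal.ofReal_mul (by positivity)]
        ring_nf

theorem stmt_17 (H : ℝ) (hH : H ∈ Set.Ioo (0:ℝ) (1/2))
    (K1 : ℝ → ℝ)
    (hK1 : ∀ T : ℝ, K1 T =
      ∫ p in {p : ℝ × ℝ × ℝ | 0 < p.2.2 ∧ p.2.2 < p.2.1 ∧ p.2.1 < p.1 ∧
          p.1 ≤ p.2.1 + p.2.2 ∧ T < p.1},
        Real.exp (-p.2.2 - p.2.1) * (p.1 - p.2.1) ^ (2 * H - 1) *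
          (p.1 - p.2.2) ^ (2 * H - 1)) :
    ∃ c : ℝ, 0 < c ∧ ∀ T : ℝ, 1 ≤ T → K1 T ≤ c * T ^ (4 * H) * Real.exp (-T) := by
  obtain ⟨hH0, hH⟩ := hH
  refine ⟨5 / (4 * H ^ 2), by positivity, fun T hT => ?_⟩
  calc K1 T ≤ ‖K1 T‖ := le_norm_self _
    _ ≤ (∫⁻ q in k1Domain T, ENNReal.ofReal ‖exp (-q.2.2 - q.2.1) *
          (q.1 - q.2.1) ^ (2 * H - 1) * (q.1 - q.2.2) ^ (2 * H - 1)‖).toReal := by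
        rw [hK1]
        exact norm_integral_le_lintegral_norm _
    _ ≤ 5 / (4 * H ^ 2) * T ^ (4 * H) * exp (-T) :=
        ENNReal.toReal_le_of_le_ofReal (by positivity)
          ((setLIntegral_ofReal_norm_le_lintegral_k1Majorant T _).trans
            (lintegral_k1Majorant_le hH0 hH.le hT))
end
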